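/- arXiv:2312.00620 — 4 statements merged into one kernel-verified Lean document; each statement's English description precedes it below -/
import Mathlib

section
/- For n > k ≥ 4, the graph (K_{k-3} ∪ I_{n-k+2}) ∨ K_1 is connected, contains no path on k vertices, and has exactly C(k-2,2) + (n-k+2) edges. -/
open SimpleGraph

/-- `H` has a copy in `G`, i.e. `G` contains `H` as a (not necessarily induced) subgraph. -/
def CopyIn {α β : Type*} (H : SimpleGraph α) (G : SimpleGraph β) : Prop :=
  ∃ f : α ↪ β, ∀ a b, H.Adj a b → G.Adj (f a) (f b)

/-- The join `G ∨ H` of two graphs: disjoint union plus all edges in between. -/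
def graphJoin {α β : Type*} (G : SimpleGraph α) (H : SimpleGraph β) : SimpleGraph (α ⊕ β) where
  Adj x y := (∃ a b, x = Sum.inl a ∧ y = Sum.inl b ∧ G.Adj a b) ∨
    (∃ a b, x = Sum.inr a ∧ y = Sum.inr b ∧ H.Adj a b) ∨
    (x.isLeft ∧ y.isRight) ∨ (x.isRight ∧ y.isLeft)
  symm := by
    constructor
    rintro x y (⟨a, b, rfl, rfl, h⟩ | ⟨a, b, rfl, rfl, h⟩ | ⟨h1, h2⟩ | ⟨h1, h2⟩)
    · exact Or.inl ⟨b, a, rfl, rfl, h.symm⟩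
    · exact Or.inr (Or.inl ⟨b, a, rfl, rfl, h.symm⟩)
    · exact Or.inr (Or.inr (Or.inr ⟨h2, h1⟩))
    · exact Or.inr (Or.inr (Or.inl ⟨h2, h1⟩))
  loopless := by
    constructor
    rintro x (⟨a, b, rfl, heq, h⟩ | ⟨a, b, rfl, heq, h⟩ | ⟨h1, h2⟩ | ⟨h1, h2⟩)
    · cases heq; exact G.irrefl h
    · cases heq; exact H.irrefl h
    · cases x <;> simp_all
    · cases x <;> simp_all

/-- A matching with `t` edges. -/
def matchingGraph (t : ℕ) : SimpleGraph (Fin t × Fin 2) :=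
  SimpleGraph.fromRel (fun p q => p.1 = q.1)

/-- The star with `t` edges. -/
def starGraph (t : ℕ) : SimpleGraph (Fin 1 ⊕ Fin t) := completeBipartiteGraph (Fin 1) (Fin t)

/-- Turán number of a single forbidden graph. -/
noncomputable def exNum1 {α : Type*} (n : ℕ) (A : SimpleGraph α) : ℕ :=
  sSup {e | ∃ G : SimpleGraph (Fin n), ¬ CopyIn A G ∧ e = G.edgeSet.ncard}

/-- Turán number of two forbidden graphs. -/
noncomputable def exNum2 {α β : Type*} (n : ℕ) (A : SimpleGraph α) (B : SimpleGraph β) : ℕ :=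
  sSup {e | ∃ G : SimpleGraph (Fin n),
    ¬ CopyIn A G ∧ ¬ CopyIn B G ∧ e = G.edgeSet.ncard}

/-- Connected Turán number of two forbidden graphs. -/
noncomputable def exConn2 {α β : Type*} (n : ℕ) (A : SimpleGraph α) (B : SimpleGraph β) : ℕ :=
  sSup {e | ∃ G : SimpleGraph (Fin n),
    G.Connected ∧ ¬ CopyIn A G ∧ ¬ CopyIn B G ∧ e = G.edgeSet.ncard}

/-- Turán number of a family of forbidden graphs. -/
noncomputable def exNumFam (n : ℕ) (F : Set (Σ V : Type, SimpleGraph V)) : ℕ :=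
  sSup {e | ∃ G : SimpleGraph (Fin n),
    (∀ M ∈ F, ¬ CopyIn M.2 G) ∧ e = G.edgeSet.ncard}

/-- The family of graphs obtained from `H` by deleting one color class of a proper coloring
of `H` with `χ(H)` colors. -/
def delClassFam {W : Type} (H : SimpleGraph W) : Set (Σ V : Type, SimpleGraph V) :=
  {M | ∃ (m : ℕ) (C : H.Coloring (Fin m)) (c : Fin m),
    H.chromaticNumber = (m : ℕ∞) ∧
    M = ⟨{v : W | C v ≠ c}, H.induce {v : W | C v ≠ c}⟩}

/-- The family of graphs obtained from `H` by deleting two adjacent vertices. -/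
def delPairFam {W : Type} (H : SimpleGraph W) : Set (Σ V : Type, SimpleGraph V) :=
  {M | ∃ u v : W, H.Adj u v ∧
    M = ⟨{x : W | x ≠ u ∧ x ≠ v}, H.induce {x : W | x ≠ u ∧ x ≠ v}⟩}
/-!
The vertices of `I_{n-k+2}` are pendant at the apex `K_1`. On an embedded path a pendant vertex
can only be an endpoint, and if both endpoints of a path on at least four vertices were pendant
at the same apex, the apex would occupy positions `1` and `k - 2` at once. So a copy of `P_k`
meets the independent set at most once and has at most `(k - 3) + 1 + 1 < k` vertices.
The edge count is the handshake lemma: joining adds `|α| |β|` edges to those of the two parts.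
-/

namespace SimpleGraph

section JoinStructure

variable {α β : Type*} {G : SimpleGraph α} {H : SimpleGraph β}

lemma graphJoin_adj_inl_inr (a : α) (b : β) : (graphJoin G H).Adj (.inl a) (.inr b) :=
  .inr <| .inr <| .inl ⟨rfl, rfl⟩

lemma neighborSet_graphJoin_inl (a : α) :
    (graphJoin G H).neighborSet (.inl a) = Sum.inl '' G.neighborSet a ∪ Set.range Sum.inr := by
  ext (x | y) <;> simp [graphJoin]

lemma neighborSet_graphJoin_inr (b : β) :
    (graphJoin G H).neighborSet (.inr b) = Sum.inr '' H.neighborSet b ∪ Set.range Sum.inl := by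
  ext (x | y) <;> simp [graphJoin]

lemma ncard_neighborSet_graphJoin_inl [Finite α] [Finite β] (a : α) :
    ((graphJoin G H).neighborSet (.inl a)).ncard = (G.neighborSet a).ncard + Nat.card β := by
  rw [neighborSet_graphJoin_inl, Set.ncard_union_eq (by simp [Set.disjoint_left]),
    Set.ncard_image_of_injective _ Sum.inl_injective,
    Set.ncard_range_of_injective Sum.inr_injective]

lemma ncard_neighborSet_graphJoin_inr [Finite α] [Finite β] (b : β) :
    ((graphJoin G H).neighborSet (.inr b)).ncard = (H.neighborSet b).ncard + Nat.card α := by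
  rw [neighborSet_graphJoin_inr, Set.ncard_union_eq (by simp [Set.disjoint_left]),
    Set.ncard_image_of_injective _ Sum.inr_injective,
    Set.ncard_range_of_injective Sum.inl_injective]

lemma graphJoin_connected [Nonempty α] [Nonempty β] : (graphJoin G H).Connected := by
  obtain ⟨a₀⟩ := ‹Nonempty α›
  obtain ⟨b₀⟩ := ‹Nonempty β›
  have reach : ∀ v, (graphJoin G H).Reachable (.inr b₀) v
    | .inl a => (graphJoin_adj_inl_inr a b₀).symm.reachable
    | .inr b => (graphJoin_adj_inl_inr a₀ b₀).symm.reachable.trans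
        (graphJoin_adj_inl_inr a₀ b).reachable
  exact ⟨fun u v => (reach u).symm.trans (reach v)⟩

lemma eq_inr_of_graphJoin_sum_bot_adj {γ : Type*} {b : γ} {w : (α ⊕ γ) ⊕ β}
    (h : (graphJoin (G ⊕g (⊥ : SimpleGraph γ)) H).Adj (.inl (.inr b)) w) :
    ∃ c, w = .inr c := by
  rcases w with (x | y) | c
  · simp [graphJoin] at h
  · simp [graphJoin] at h
  · exact ⟨c, rfl⟩

end JoinStructure

section EdgeCount

variable {V : Type*} [Fintype V]

lemma two_mul_ncard_edgeSet (G : SimpleGraph V) :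
    2 * G.edgeSet.ncard = ∑ v, (G.neighborSet v).ncard := by
  classical
  rw [Set.ncard_eq_toFinset_card', ← edgeFinset, ← sum_degrees_eq_twice_card_edges]
  simp only [← card_neighborSet_eq_degree, Set.ncard_eq_toFinset_card', Set.toFinset_card]

variable {α β : Type*} [Fintype α] [Fintype β] (G : SimpleGraph α) (H : SimpleGraph β)

lemma ncard_edgeSet_sum :
    (G ⊕g H).edgeSet.ncard = G.edgeSet.ncard + H.edgeSet.ncard := by
  have h := two_mul_ncard_edgeSet (G ⊕g H)
  simp only [Fintype.sum_sum_type, neighborSet_sum_inl, neighborSet_sum_inr,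
    Set.ncard_image_of_injective _ Sum.inl_injective,
    Set.ncard_image_of_injective _ Sum.inr_injective] at h
  rw [← two_mul_ncard_edgeSet, ← two_mul_ncard_edgeSet] at h
  omega

lemma ncard_edgeSet_graphJoin :
    (graphJoin G H).edgeSet.ncard =
      G.edgeSet.ncard + H.edgeSet.ncard + Fintype.card α * Fintype.card β := by
  have h := two_mul_ncard_edgeSet (graphJoin G H)
  simp only [Fintype.sum_sum_type, ncard_neighborSet_graphJoin_inl,
    ncard_neighborSet_graphJoin_inr, Finset.sum_add_distrib, Finset.sum_const, Finset.card_univ,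
    Nat.card_eq_fintype_card, smul_eq_mul] at h
  rw [← two_mul_ncard_edgeSet, ← two_mul_ncard_edgeSet] at h
  linarith

lemma ncard_edgeSet_top : (⊤ : SimpleGraph V).edgeSet.ncard = (Fintype.card V).choose 2 := by
  classical
  rw [Set.ncard_eq_toFinset_card', ← edgeFinset, card_edgeFinset_top_eq_card_choose_two]

end EdgeCount

section PathCopies

variable {V : Type*} {G : SimpleGraph V} {L : ℕ} {f : Fin L ↪ V}
  (hf : ∀ i j, (pathGraph L).Adj i j → G.Adj (f i) (f j))
include hf

lemma val_eq_zero_or_succ_val_eq_of_forall_adj_eq {i : Fin L} {z : V}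
    (hi : ∀ w, G.Adj (f i) w → w = z) : i.val = 0 ∨ i.val + 1 = L := by
  by_contra! h
  have prev : f ⟨i - 1, by omega⟩ = z := hi _ (hf _ _ (pathGraph_adj.2 (.inr (by simp; omega))))
  have next : f ⟨i + 1, by omega⟩ = z := hi _ (hf _ _ (pathGraph_adj.2 (.inl rfl)))
  have := congrArg Fin.val (f.injective (prev.trans next.symm))
  simp only at this
  omega

lemma eq_of_mem_of_forall_adj_eq (hL : 4 ≤ L) {S : Set V} {z : V}
    (hS : ∀ v ∈ S, ∀ w, G.Adj v w → w = z)
    {i j : Fin L} (hi : f i ∈ S) (hj : f j ∈ S) : i = j := by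
  wlog hij : i.val < j.val generalizing i j
  · rcases (not_lt.1 hij).lt_or_eq with h | h
    · exact (this hj hi h).symm
    · exact Fin.ext h.symm
  have hi0 : i.val = 0 := by
    have := val_eq_zero_or_succ_val_eq_of_forall_adj_eq hf (hS _ hi); omega
  have hjL : j.val + 1 = L := by
    have := val_eq_zero_or_succ_val_eq_of_forall_adj_eq hf (hS _ hj); omega
  have second : f ⟨1, by omega⟩ = z := hS _ hi _ (hf _ _ (pathGraph_adj.2 (.inl (by simp [hi0]))))
  have penultimate : f ⟨L - 2, by omega⟩ = z :=
    hS _ hj _ (hf _ _ (pathGraph_adj.2 (.inr (by simp; omega))))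
  have := congrArg Fin.val (f.injective (second.trans penultimate.symm))
  simp only at this
  omega

end PathCopies

lemma le_ncard_compl_add_one_of_copyIn_pathGraph {V : Type*} [Finite V] {G : SimpleGraph V}
    {L : ℕ} (h : CopyIn (pathGraph L) G) (hL : 4 ≤ L) {S : Set V} {z : V}
    (hS : ∀ v ∈ S, ∀ w, G.Adj v w → w = z) : L ≤ Sᶜ.ncard + 1 := by
  obtain ⟨f, hf⟩ := h
  have hS_le : (Set.range f ∩ S).ncard ≤ 1 :=
    (Set.ncard_le_one ..).2 fun _ ⟨⟨i, hi⟩, hiS⟩ _ ⟨⟨j, hj⟩, hjS⟩ => by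
      subst hi hj; rw [eq_of_mem_of_forall_adj_eq hf hL hS hiS hjS]
  calc L = (Set.range f).ncard := by rw [Set.ncard_range_of_injective f.injective, Nat.card_fin]
    _ ≤ (Set.range f ∩ S ∪ Sᶜ).ncard := Set.ncard_le_ncard fun v hv => by
        by_cases h : v ∈ S <;> simp [hv, h]
    _ ≤ Sᶜ.ncard + 1 := by have := Set.ncard_union_le (Set.range f ∩ S) Sᶜ; omega

lemma not_copyIn_pathGraph_graphJoin_sum_bot {α γ : Type*} [Fintype α] [Fintype γ]
    (G : SimpleGraph α) {L : ℕ} (hL : 4 ≤ L) (hαL : Fintype.card α + 3 ≤ L) :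
    ¬ CopyIn (pathGraph L) (graphJoin (G ⊕g (⊥ : SimpleGraph γ)) (completeGraph (Fin 1))) := by
  intro hcopy
  set S : Set ((α ⊕ γ) ⊕ Fin 1) := Set.range (Sum.inl ∘ Sum.inr)
  have hS : ∀ v ∈ S, ∀ w, (graphJoin (G ⊕g ⊥) (completeGraph (Fin 1))).Adj v w → w = .inr 0 := by
    rintro _ ⟨b, rfl⟩ w hw
    obtain ⟨c, rfl⟩ := eq_inr_of_graphJoin_sum_bot_adj hw
    rw [Subsingleton.elim c 0]
  have hSc : Sᶜ.ncard = Fintype.card α + 1 := by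
    have := Set.ncard_add_ncard_compl S
    rw [Set.ncard_range_of_injective (Sum.inl_injective.comp Sum.inr_injective)] at this
    simp only [Nat.card_eq_fintype_card, Fintype.card_sum, Fintype.card_fin] at this
    omega
  have := le_ncard_compl_add_one_of_copyIn_pathGraph hcopy hL hS
  omega

end SimpleGraph

theorem extremal_graph_one_general (n k : ℕ) (hk : 4 ≤ k) :
    (graphJoin ((completeGraph (Fin (k - 3))) ⊕g (⊥ : SimpleGraph (Fin (n - k + 2))))
        (completeGraph (Fin 1))).Connected ∧
    ¬ CopyIn (pathGraph k)
      (graphJoin ((completeGraph (Fin (k - 3))) ⊕g (⊥ : SimpleGraph (Fin (n - k + 2))))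
        (completeGraph (Fin 1))) ∧
    (graphJoin ((completeGraph (Fin (k - 3))) ⊕g (⊥ : SimpleGraph (Fin (n - k + 2))))
        (completeGraph (Fin 1))).edgeSet.ncard = Nat.choose (k - 2) 2 + (n - k + 2) := by
  refine ⟨graphJoin_connected, not_copyIn_pathGraph_graphJoin_sum_bot _ hk (by simp; omega), ?_⟩
  rw [ncard_edgeSet_graphJoin, ncard_edgeSet_sum, completeGraph, completeGraph,
    ncard_edgeSet_top, ncard_edgeSet_top, edgeSet_bot, Set.ncard_empty,
    show k - 2 = k - 3 + 1 by omega, Nat.choose_succ_succ', Nat.choose_one_right]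
  simp only [Fintype.card_sum, Fintype.card_fin, Nat.choose_succ_self, Nat.reduceAdd]
  omega

theorem extremal_graph_one (n k : ℕ) (hk : 4 ≤ k) (hnk : k < n) :
    (graphJoin ((completeGraph (Fin (k - 3))) ⊕g (⊥ : SimpleGraph (Fin (n - k + 2))))
        (completeGraph (Fin 1))).Connected ∧
    ¬ CopyIn (pathGraph k)
      (graphJoin ((completeGraph (Fin (k - 3))) ⊕g (⊥ : SimpleGraph (Fin (n - k + 2))))
        (completeGraph (Fin 1))) ∧
    (graphJoin ((completeGraph (Fin (k - 3))) ⊕g (⊥ : SimpleGraph (Fin (n - k + 2))))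
        (completeGraph (Fin 1))).edgeSet.ncard = Nat.choose (k - 2) 2 + (n - k + 2) :=
  extremal_graph_one_general n k hk
end

section
/- For n > k ≥ 4, the graph (K_{k-2⌊k/2⌋+1} ∪ I_{n-⌈k/2⌉}) ∨ K_{⌊k/2⌋-1} is connected, contains no path on k vertices, and has exactly C(⌈k/2⌉,2) + ⌊(k-2)/2⌋·(n - ⌈k/2⌉) edges. -/
open SimpleGraph

/-!
Every edge of `(K_a ∪ I_b) ∨ K_c` meets the clique `K_c` or lies inside `K_a`. A path uses at most
two edges at each vertex of `K_c` and, being acyclic, at most `a - 1` edges inside `K_a`; so it has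
at most `2c + a - 1 = k - 2` edges when `a = k - 2⌊k/2⌋ + 1` and `c = ⌊k/2⌋ - 1`. The edge count is
`C(a,2) + C(c,2) + (a + b)c = C(a + c, 2) + bc`, where `a + c = ⌈k/2⌉` and `c = ⌊(k-2)/2⌋`.
-/

open Finset

theorem Nat.add_choose_two (a c : ℕ) : (a + c).choose 2 = a.choose 2 + c.choose 2 + a * c := by
  rw [Nat.add_choose_eq]
  simp only [Finset.Nat.sum_antidiagonal_succ, Finset.HasAntidiagonal.antidiagonal_zero,
    Finset.sum_singleton, Nat.reduceAdd, zero_add, Nat.choose_zero_right, Nat.choose_one_right,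
    one_mul, mul_one]
  ring

theorem ncard_edgeSet_completeGraph (V : Type*) [Fintype V] :
    (completeGraph V).edgeSet.ncard = (Fintype.card V).choose 2 := by
  classical
  rw [show completeGraph V = ⊤ from rfl, ← coe_edgeFinset, Set.ncard_coe_finset,
    card_edgeFinset_top_eq_card_choose_two]

section Join

variable {α β : Type*} (G : SimpleGraph α) (H : SimpleGraph β)

theorem graphJoin_adj_inl_inr (a : α) (b : β) : (graphJoin G H).Adj (.inl a) (.inr b) := by
  simp [graphJoin]

theorem graphJoin_connected [Nonempty α] [Nonempty β] : (graphJoin G H).Connected := by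
  obtain ⟨a₀⟩ := ‹Nonempty α›
  obtain ⟨b₀⟩ := ‹Nonempty β›
  have reach : ∀ v, (graphJoin G H).Reachable v (.inl a₀) := by
    rintro (a | b)
    · exact (graphJoin_adj_inl_inr G H a b₀).reachable.trans
        (graphJoin_adj_inl_inr G H a₀ b₀).reachable.symm
    · exact (graphJoin_adj_inl_inr G H a₀ b).reachable.symm
  exact .mk fun u v => (reach u).trans (reach v).symm

theorem graphJoin_eq_sum_sup_completeBipartiteGraph :
    graphJoin G H = (G ⊕g H) ⊔ completeBipartiteGraph α β := by
  ext (a | a) (b | b) <;> simp [graphJoin]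

theorem disjoint_sum_completeBipartiteGraph :
    Disjoint (G ⊕g H) (completeBipartiteGraph α β) := by
  rw [disjoint_iff_inf_le]
  rintro (a | a) (b | b) <;> simp

theorem encard_edgeSet_sum :
    (G ⊕g H).edgeSet.encard = G.edgeSet.encard + H.edgeSet.encard := by
  simp only [Set.encard, ENat.card_congr (edgeSetSumEquiv (G := G) (H := H)), ENat.card_sum]

theorem encard_edgeSet_graphJoin :
    (graphJoin G H).edgeSet.encard =
      G.edgeSet.encard + H.edgeSet.encard + ENat.card α * ENat.card β := by
  rw [graphJoin_eq_sum_sup_completeBipartiteGraph, edgeSet_sup,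
    Set.encard_union_eq (disjoint_edgeSet.2 (disjoint_sum_completeBipartiteGraph G H)),
    encard_edgeSet_sum, encard_edgeSet_completeBipartiteGraph]

theorem ncard_edgeSet_graphJoin [Finite α] [Finite β] :
    (graphJoin G H).edgeSet.ncard =
      G.edgeSet.ncard + H.edgeSet.ncard + Nat.card α * Nat.card β := by
  have h := encard_edgeSet_graphJoin G H
  simp only [← Set.Finite.cast_ncard_eq (Set.toFinite _), ENat.card_eq_coe_natCard] at h
  exact_mod_cast h

theorem ncard_edgeSet_sum [Finite α] [Finite β] :
    (G ⊕g H).edgeSet.ncard = G.edgeSet.ncard + H.edgeSet.ncard := by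
  have h := encard_edgeSet_sum G H
  simp only [← Set.Finite.cast_ncard_eq (Set.toFinite _)] at h
  exact_mod_cast h

end Join

namespace Fin

variable {m : ℕ}

theorem card_filter_castSucc_mem_and_succ_mem_le (A : Finset (Fin (m + 1))) :
    #{i : Fin m | i.castSucc ∈ A ∧ i.succ ∈ A} ≤ #A - 1 := by
  set Q := ({i : Fin m | i.castSucc ∈ A ∧ i.succ ∈ A} : Finset (Fin m))
  rcases Q.eq_empty_or_nonempty with hQ | hQ
  · simp [hQ]
  have hsub : Q.image succ ⊆ A := fun _ hj => by
    obtain ⟨i, hi, rfl⟩ := mem_image.1 hj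
    exact (mem_filter.1 hi).2.2
  -- the first step inside `A` starts at a vertex of `A` at which no such step ends
  have hfirst : (Q.min' hQ).castSucc ∉ Q.image succ := fun h => by
    obtain ⟨j, hj, hji⟩ := mem_image.1 h
    have hle := Q.min'_le j hj
    rw [le_def] at hle
    rw [Fin.ext_iff, val_succ, val_castSucc] at hji
    omega
  have hlt : #Q < #A := by
    rw [← card_image_of_injective Q (succ_injective _)]
    exact card_lt_card ((ssubset_iff_of_subset hsub).2
      ⟨_, (mem_filter.1 (Q.min'_mem hQ)).2.1, hfirst⟩)
  omega

theorem le_two_mul_card_add_card_sub_one (A B : Finset (Fin (m + 1)))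
    (h : ∀ i : Fin m, i.castSucc ∈ B ∨ i.succ ∈ B ∨ i.castSucc ∈ A ∧ i.succ ∈ A) :
    m ≤ 2 * #B + (#A - 1) := by
  set P₁ : Finset (Fin m) := {i | i.castSucc ∈ B}
  set P₂ : Finset (Fin m) := {i | i.succ ∈ B}
  set Q : Finset (Fin m) := {i | i.castSucc ∈ A ∧ i.succ ∈ A}
  have hP₁ : #P₁ ≤ #B :=
    card_le_card_of_injOn _ (fun i hi => (mem_filter.1 hi).2) (castSucc_injective m).injOn
  have hP₂ : #P₂ ≤ #B :=
    card_le_card_of_injOn _ (fun i hi => (mem_filter.1 hi).2) (succ_injective m).injOn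
  have hQ : #Q ≤ #A - 1 := card_filter_castSucc_mem_and_succ_mem_le A
  calc m = #(univ : Finset (Fin m)) := by simp
    _ ≤ #(P₁ ∪ P₂ ∪ Q) := card_le_card fun i _ => by simpa [P₁, P₂, Q, or_assoc] using h i
    _ ≤ #P₁ + #P₂ + #Q := (card_union_le _ _).trans (Nat.add_le_add_right (card_union_le _ _) _)
    _ ≤ 2 * #B + (#A - 1) := by omega

end Fin

theorem le_of_copyIn_pathGraph_of_forall_adj {V : Type*} {G : SimpleGraph V} {m : ℕ}
    {S T : Finset V} (hST : ∀ u v, G.Adj u v → u ∈ S ∨ v ∈ S ∨ u ∈ T ∧ v ∈ T)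
    (hP : CopyIn (pathGraph (m + 1)) G) : m ≤ 2 * #S + (#T - 1) := by
  classical
  obtain ⟨f, hf⟩ := hP
  have hcard (U : Finset V) : #{j | f j ∈ U} ≤ #U :=
    card_le_card_of_injOn f (fun i hi => (mem_filter.1 hi).2) f.injective.injOn
  refine (Fin.le_two_mul_card_add_card_sub_one {j | f j ∈ T} {j | f j ∈ S} fun i => ?_).trans
    (by have := hcard S; have := hcard T; omega)
  simpa using hST _ _ (hf i.castSucc i.succ (by simp [pathGraph_adj]))

theorem le_of_copyIn_pathGraph_graphJoin_sum_bot {α β γ : Type*} [Fintype α] [Fintype γ]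
    (G : SimpleGraph α) (H : SimpleGraph γ) {m : ℕ}
    (h : CopyIn (pathGraph (m + 1)) (graphJoin (G ⊕g (⊥ : SimpleGraph β)) H)) :
    m ≤ 2 * Fintype.card γ + (Fintype.card α - 1) := by
  have hST : ∀ u v, (graphJoin (G ⊕g (⊥ : SimpleGraph β)) H).Adj u v →
      u ∈ univ.map .inr ∨ v ∈ univ.map .inr ∨
        u ∈ univ.map (.trans .inl .inl) ∧ v ∈ univ.map (.trans .inl .inl) := by
    rintro ((a | b) | c) ((a' | b') | c') hadj <;> simp [graphJoin] at hadj ⊢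
  simpa using le_of_copyIn_pathGraph_of_forall_adj hST h

theorem extremal_graph_two_general (n k : ℕ) (hk : 4 ≤ k) :
    (graphJoin ((completeGraph (Fin (k - 2 * (k / 2) + 1)))
          ⊕g (⊥ : SimpleGraph (Fin (n - (k + 1) / 2))))
        (completeGraph (Fin (k / 2 - 1)))).Connected ∧
    ¬ CopyIn (pathGraph k)
      (graphJoin ((completeGraph (Fin (k - 2 * (k / 2) + 1)))
          ⊕g (⊥ : SimpleGraph (Fin (n - (k + 1) / 2))))
        (completeGraph (Fin (k / 2 - 1)))) ∧
    (graphJoin ((completeGraph (Fin (k - 2 * (k / 2) + 1)))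
          ⊕g (⊥ : SimpleGraph (Fin (n - (k + 1) / 2))))
        (completeGraph (Fin (k / 2 - 1)))).edgeSet.ncard
      = Nat.choose ((k + 1) / 2) 2 + ((k - 2) / 2) * (n - (k + 1) / 2) := by
  have : NeZero (k / 2 - 1) := ⟨by omega⟩
  refine ⟨graphJoin_connected _ _, fun hP => ?_, ?_⟩
  · obtain ⟨m, rfl⟩ : ∃ m, k = m + 1 := ⟨k - 1, by omega⟩
    have := le_of_copyIn_pathGraph_graphJoin_sum_bot _ _ hP
    simp only [Fintype.card_fin] at this
    omega
  · rw [ncard_edgeSet_graphJoin, ncard_edgeSet_sum, ncard_edgeSet_completeGraph,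
      ncard_edgeSet_completeGraph, edgeSet_bot, Set.ncard_empty, Nat.card_sum]
    simp only [Nat.card_eq_fintype_card, Fintype.card_fin]
    generalize n - (k + 1) / 2 = b
    rw [show (k + 1) / 2 = (k - 2 * (k / 2) + 1) + (k / 2 - 1) by omega,
      show (k - 2) / 2 = k / 2 - 1 by omega]
    generalize k - 2 * (k / 2) + 1 = a, k / 2 - 1 = c
    rw [Nat.add_choose_two]
    ring

theorem extremal_graph_two (n k : ℕ) (hk : 4 ≤ k) (hnk : k < n) :
    (graphJoin ((completeGraph (Fin (k - 2 * (k / 2) + 1)))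
          ⊕g (⊥ : SimpleGraph (Fin (n - (k + 1) / 2))))
        (completeGraph (Fin (k / 2 - 1)))).Connected ∧
    ¬ CopyIn (pathGraph k)
      (graphJoin ((completeGraph (Fin (k - 2 * (k / 2) + 1)))
          ⊕g (⊥ : SimpleGraph (Fin (n - (k + 1) / 2))))
        (completeGraph (Fin (k / 2 - 1)))) ∧
    (graphJoin ((completeGraph (Fin (k - 2 * (k / 2) + 1)))
          ⊕g (⊥ : SimpleGraph (Fin (n - (k + 1) / 2))))
        (completeGraph (Fin (k / 2 - 1)))).edgeSet.ncard
      = Nat.choose ((k + 1) / 2) 2 + ((k - 2) / 2) * (n - (k + 1) / 2) :=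
  extremal_graph_two_general n k hk
end

section
/- Let G be a connected graph on n vertices containing a path P on k-1 vertices but no path on k vertices. Let u ∈ V(G)\V(P) be a vertex adjacent to s ≥ 1 vertices of P, and suppose a longest path in G\V(P) starting at u has j ≥ 0 vertices. Then s + j ≤ ⌊k/2⌋. -/
open SimpleGraph

/-!
Write `p₀, …, p_{k-2}` for the vertices of `P`. If `u ∼ pᵢ`, then running along a longest
`u`-path `Q` backwards, across the edge `u pᵢ` and along `P` to either end gives a path, so
`j + (k - 1 - i) < k` and `j + i + 1 < k`, i.e. `j ≤ i ≤ k - 2 - j`. No two neighbours of `u`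
are consecutive on `P`, for otherwise inserting `u` between them gives a path on `k` vertices.
So the `s` neighbour indices form a set without consecutive elements inside an interval of
`k - 1 - 2j` integers, whence `2s ≤ k - 2j`.
-/

theorem two_mul_ncard_le_of_succ_notMem {S : Set ℕ} {a b : ℕ} (hS : ∀ i ∈ S, a ≤ i ∧ i < b)
    (hsep : ∀ i ∈ S, i + 1 ∉ S) : 2 * S.ncard ≤ b - a + 1 := by
  have hgap : ∀ i ∈ S, ∀ i' ∈ S, i < i' → i + 2 ≤ i' := fun i hi i' hi' hlt => by
    have : i + 1 ≠ i' := fun e => hsep i hi (e ▸ hi')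
    omega
  have hinj : Set.InjOn (fun i => (i - a) / 2) S := by
    intro i hi i' hi' h
    have := hS i hi
    have := hS i' hi'
    rcases lt_trichotomy i i' with hlt | heq | hlt
    · have := hgap i hi i' hi' hlt
      simp only at h
      omega
    · exact heq
    · have := hgap i' hi' i hi hlt
      simp only at h
      omega
  have hmaps : ∀ i ∈ S, (i - a) / 2 ∈ (Finset.range ((b - a + 1) / 2) : Set ℕ) := fun i hi => by
    have := hS i hi
    simp only [Finset.coe_range, Set.mem_Iio]
    omega
  have := Set.ncard_le_ncard_of_injOn _ hmaps hinj
  rw [Set.ncard_coe_finset, Finset.card_range] at this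
  omega

section PathsInLists

variable {V : Type*} {G : SimpleGraph V} {k : ℕ} {L M : List V} {u : V}

theorem copyIn_pathGraph_of_isChain {l : List V} (hnd : l.Nodup) (hc : l.IsChain G.Adj)
    (hk : k ≤ l.length) : CopyIn (pathGraph k) G := by
  have hadj : ∀ (i : ℕ) (hi : i + 1 < l.length), G.Adj (l[i]'(by omega)) l[i + 1] :=
    List.isChain_iff_getElem.mp hc
  refine ⟨⟨fun i => l[i.val]'(by omega), fun i i' h => Fin.ext ((hnd.getElem_inj_iff).mp h)⟩, ?_⟩
  rintro ⟨a, ha⟩ ⟨b, hb⟩ hab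
  rcases pathGraph_adj.mp hab with (rfl : a + 1 = b) | (rfl : b + 1 = a)
  · exact hadj a (by omega)
  · exact (hadj b (by omega)).symm

theorem length_lt_of_not_copyIn_pathGraph (hno : ¬ CopyIn (pathGraph k) G) {l : List V}
    (hnd : l.Nodup) (hc : l.IsChain G.Adj) : l.length < k :=
  lt_of_not_ge fun hk => hno (copyIn_pathGraph_of_isChain hnd hc hk)

def neighborIndexSet (G : SimpleGraph V) (u : V) (L : List V) : Set ℕ :=
  {i | ∃ h : i < L.length, G.Adj u L[i]}

theorem ncard_neighborIndexSet (hL : L.Nodup) :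
    (neighborIndexSet G u L).ncard = {v | v ∈ L ∧ G.Adj u v}.ncard :=
  Set.ncard_congr (fun i hi => L[i]'hi.1) (fun _ hi => ⟨List.getElem_mem _, hi.2⟩)
    (fun _ _ _ _ h => hL.getElem_inj_iff.mp h)
    (fun _ ⟨hv, hadj⟩ => by
      obtain ⟨i, hi, rfl⟩ := List.mem_iff_getElem.mp hv
      exact ⟨i, ⟨hi, hadj⟩, rfl⟩)

theorem length_add_length_sub_lt_of_mem_neighborIndexSet (hno : ¬ CopyIn (pathGraph k) G)
    (hL : L.Nodup) (hLc : L.IsChain G.Adj) (hM : M.Nodup) (hMc : M.IsChain G.Adj)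
    (hMu : M.head? = some u) (hdisj : M.Disjoint L) {i : ℕ} (hi : i ∈ neighborIndexSet G u L) :
    M.length + (L.length - i) < k := by
  obtain ⟨hi, hadj⟩ := hi
  have hnd : (M.reverse ++ L.drop i).Nodup :=
    List.nodup_append.2 ⟨List.nodup_reverse.2 hM, hL.sublist (List.drop_sublist i L),
      fun a ha b hb hab => hdisj (List.mem_reverse.1 ha) (hab ▸ List.mem_of_mem_drop hb)⟩
  have hc : (M.reverse ++ L.drop i).IsChain G.Adj := by
    refine List.isChain_append.2 ⟨List.isChain_reverse.2 (hMc.imp fun _ _ h => h.symm),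
      hLc.drop i, ?_⟩
    simp [List.getLast?_reverse, hMu, hi, hadj]
  simpa using length_lt_of_not_copyIn_pathGraph hno hnd hc

theorem length_add_succ_lt_of_mem_neighborIndexSet (hno : ¬ CopyIn (pathGraph k) G)
    (hL : L.Nodup) (hLc : L.IsChain G.Adj) (hM : M.Nodup) (hMc : M.IsChain G.Adj)
    (hMu : M.head? = some u) (hdisj : M.Disjoint L) {i : ℕ} (hi : i ∈ neighborIndexSet G u L) :
    M.length + (i + 1) < k := by
  obtain ⟨hi, hadj⟩ := hi
  have hrev : L.length - 1 - i ∈ neighborIndexSet G u L.reverse :=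
    ⟨by simp only [List.length_reverse]; omega, by
      simpa [List.getElem_reverse, show L.length - 1 - (L.length - 1 - i) = i by omega] using hadj⟩
  have := length_add_length_sub_lt_of_mem_neighborIndexSet hno (List.nodup_reverse.2 hL)
    (List.isChain_reverse.2 (hLc.imp fun _ _ h => h.symm)) hM hMc hMu
    (List.disjoint_reverse_right.2 hdisj) hrev
  simp only [List.length_reverse] at this
  omega

theorem succ_notMem_neighborIndexSet (hno : ¬ CopyIn (pathGraph k) G) (hL : L.Nodup)
    (hLc : L.IsChain G.Adj) (hu : u ∉ L) (hk : k ≤ L.length + 1) {i : ℕ}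
    (hi : i ∈ neighborIndexSet G u L) : i + 1 ∉ neighborIndexSet G u L := by
  rintro ⟨hi1, hadj1⟩
  obtain ⟨hi, hadj⟩ := hi
  have hnd : (L.take (i + 1) ++ u :: L.drop (i + 1)).Nodup := by
    refine List.nodup_append.2 ⟨hL.sublist (List.take_sublist _ _), List.nodup_cons.2
      ⟨fun h => hu (List.mem_of_mem_drop h), hL.sublist (List.drop_sublist _ _)⟩, ?_⟩
    rintro a ha b hb rfl
    rcases List.mem_cons.1 hb with rfl | hb
    · exact hu (List.mem_of_mem_take ha)
    · exact List.disjoint_take_drop hL le_rfl ha hb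
  have hc : (L.take (i + 1) ++ u :: L.drop (i + 1)).IsChain G.Adj := by
    refine List.isChain_append.2 ⟨hLc.take _, List.isChain_cons.2 ⟨?_, hLc.drop _⟩, ?_⟩
    · simp [hi1, hadj1]
    · simp [List.getLast?_take, hi, hadj.symm]
  have := length_lt_of_not_copyIn_pathGraph hno hnd hc
  simp only [List.length_append, List.length_take, List.length_cons, List.length_drop] at this
  omega

end PathsInLists

theorem lemma_longest_path_from_outside_general {V : Type*} (G : SimpleGraph V)
    (k : ℕ)
    (x y : V) (P : G.Walk x y) (hP : P.IsPath) (hPlen : P.support.length = k - 1)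
    (hnoPk : ¬ CopyIn (pathGraph k) G)
    (u : V) (hu : u ∈ {v : V | v ∉ P.support})
    (s : ℕ) (hs : 1 ≤ s) (hsdef : {v : V | v ∈ P.support ∧ G.Adj u v}.ncard = s)
    (j : ℕ)
    (hQex : ∃ (w : {v : V | v ∉ P.support})
        (Q : (G.induce {v : V | v ∉ P.support}).Walk ⟨u, hu⟩ w),
        Q.IsPath ∧ Q.support.length = j) :
    s + j ≤ k / 2 := by
  obtain ⟨w, Q, hQ, hQlen⟩ := hQex
  set Q' := Q.map (Embedding.induce _).toHom
  have hQ' : Q'.IsPath := hQ.map (Embedding.induce (G := G) _).injective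
  have hQ'len : Q'.support.length = j := by rw [Walk.support_map, List.length_map, hQlen]
  have hdisj : Q'.support.Disjoint P.support := by
    simp only [Q', Walk.support_map, List.Disjoint, List.mem_map]
    rintro _ ⟨v, -, rfl⟩
    exact v.2
  have hhead : Q'.support.head? = some u := by rw [← Walk.cons_tail_support]; rfl
  set I := neighborIndexSet G u P.support
  have hlower : ∀ i ∈ I, j ≤ i := fun i hi => by
    have := length_add_length_sub_lt_of_mem_neighborIndexSet hnoPk hP.support_nodup
      P.isChain_adj_support hQ'.support_nodup Q'.isChain_adj_support hhead hdisj hi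
    omega
  have hupper : ∀ i ∈ I, i < k - 1 - j := fun i hi => by
    have := length_add_succ_lt_of_mem_neighborIndexSet hnoPk hP.support_nodup
      P.isChain_adj_support hQ'.support_nodup Q'.isChain_adj_support hhead hdisj hi
    omega
  have hsep : ∀ i ∈ I, i + 1 ∉ I := fun i hi =>
    succ_notMem_neighborIndexSet hnoPk hP.support_nodup P.isChain_adj_support hu (by omega) hi
  have hcount := two_mul_ncard_le_of_succ_notMem (fun i hi => ⟨hlower i hi, hupper i hi⟩) hsep
  rw [ncard_neighborIndexSet hP.support_nodup, hsdef] at hcount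
  omega

theorem lemma_longest_path_from_outside {V : Type*} [Fintype V] (G : SimpleGraph V)
    (k : ℕ) (hconn : G.Connected)
    (x y : V) (P : G.Walk x y) (hP : P.IsPath) (hPlen : P.support.length = k - 1)
    (hnoPk : ¬ CopyIn (pathGraph k) G)
    (u : V) (hu : u ∈ {v : V | v ∉ P.support})
    (s : ℕ) (hs : 1 ≤ s) (hsdef : {v : V | v ∈ P.support ∧ G.Adj u v}.ncard = s)
    (j : ℕ)
    (hQex : ∃ (w : {v : V | v ∉ P.support})
        (Q : (G.induce {v : V | v ∉ P.support}).Walk ⟨u, hu⟩ w),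
        Q.IsPath ∧ Q.support.length = j)
    (hQmax : ∀ (w : {v : V | v ∉ P.support})
        (Q : (G.induce {v : V | v ∉ P.support}).Walk ⟨u, hu⟩ w),
        Q.IsPath → Q.support.length ≤ j) :
    s + j ≤ k / 2 :=
  lemma_longest_path_from_outside_general G k x y P hP hPlen hnoPk u hu s hs hsdef j hQex
end

section
/- Let G be a connected graph on k vertices with no Hamiltonian path but containing a path P = (v_1, v_2, ..., v_{k-1}) on k-1 vertices, and let u be the vertex of G not on P. If u is adjacent to s vertices of P, then s ≤ ⌊k/2⌋ - 1. -/
open SimpleGraph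

/-!
A path on `k` vertices cannot exist, so `P` cannot be extended by `u`: `u` is adjacent to neither
end of `P`, and to no two consecutive vertices of `P`, since otherwise `u` could be inserted
between them. Hence the positions of the neighbours of `u` form a set of pairwise
non-consecutive numbers among the `k - 3` inner positions of `P`, which has at most
`⌈(k - 3) / 2⌉ = ⌊k / 2⌋ - 1` elements.
-/

theorem copyIn_of_isContained {α β : Type*} {H : SimpleGraph α} {G : SimpleGraph β}
    (h : H ⊑ G) : CopyIn H G :=
  let ⟨f⟩ := h
  ⟨f.toEmbedding, fun _ _ hab => f.toHom.map_adj hab⟩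

theorem copyIn_pathGraph_of_nodup_isChain {V : Type*} {G : SimpleGraph V} {L : List V}
    (hnd : L.Nodup) (hch : L.IsChain G.Adj) : CopyIn (pathGraph L.length) G := by
  by_cases hne : L = []
  · subst hne
    exact ⟨⟨Fin.elim0, fun a => a.elim0⟩, fun a => a.elim0⟩
  · have hpath : (Walk.ofSupport L hne hch).IsPath := .mk' (by simpa using hnd)
    have hlen : (Walk.ofSupport L hne hch).length + 1 = L.length := by
      have := List.length_pos_iff.mpr hne
      simp only [Walk.length_ofSupport]
      omega
    exact copyIn_of_isContained (hlen ▸ hpath.isContained_pathGraph)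

theorem List.IsChain.take_append_cons_drop {α : Type*} {R : α → α → Prop} {L : List α}
    (hL : L.IsChain R) {i : ℕ} (hi : i + 1 < L.length) {u : α} (h₁ : R L[i] u)
    (h₂ : R u L[i + 1]) : (L.take (i + 1) ++ u :: L.drop (i + 1)).IsChain R := by
  refine List.isChain_append.mpr ⟨hL.take _, ?_, ?_⟩
  · rw [List.drop_eq_getElem_cons hi]
    refine List.isChain_cons_cons.mpr ⟨h₂, ?_⟩
    rw [← List.drop_eq_getElem_cons hi]
    exact hL.drop _
  · intro a ha b hb
    simp only [List.head?_cons, Option.mem_some_iff] at hb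
    rw [List.take_add_one, List.getElem?_eq_getElem (by omega)] at ha
    simp only [Option.toList_some, List.getLast?_concat, Option.mem_some_iff] at ha
    exact ha ▸ hb ▸ h₁

theorem Set.ncard_le_of_subset_Ico_of_add_one_notMem {S : Set ℕ} {n : ℕ}
    (hS : S ⊆ Set.Ico 1 n) (hgap : ∀ i ∈ S, i + 1 ∉ S) : S.ncard ≤ n / 2 := by
  have hmaps : ∀ i ∈ S, (i - 1) / 2 ∈ (Finset.range (n / 2) : Set ℕ) := by
    intro i hi
    have := hS hi
    simp only [Set.mem_Ico, Finset.coe_range, Set.mem_Iio] at this ⊢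
    omega
  -- `i ↦ (i - 1) / 2` only identifies consecutive numbers
  have hinj : Set.InjOn (fun i => (i - 1) / 2) S := by
    intro i hi j hj hij
    have : j ≠ i + 1 := fun h => hgap i hi (h ▸ hj)
    have : i ≠ j + 1 := fun h => hgap j hj (h ▸ hi)
    have := (hS hi).1
    have := (hS hj).1
    simp only at hij
    omega
  simpa using Set.ncard_le_ncard_of_injOn _ hmaps hinj (Finset.finite_toSet _)

namespace SimpleGraph

variable {V : Type*} {G : SimpleGraph V} {L : List V} {u : V}

theorem not_adj_getElem_zero (hnd : L.Nodup) (hch : L.IsChain G.Adj) (hu : u ∉ L)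
    (hmax : ¬ CopyIn (pathGraph (L.length + 1)) G) (hL : 0 < L.length) : ¬ G.Adj u L[0] :=
  fun hadj => hmax <| by
    simpa using copyIn_pathGraph_of_nodup_isChain (L := u :: L) (List.nodup_cons.mpr ⟨hu, hnd⟩)
      (List.isChain_cons.mpr ⟨fun v hv => by simp_all [List.head?_eq_getElem?], hch⟩)

theorem not_adj_getElem_last (hnd : L.Nodup) (hch : L.IsChain G.Adj) (hu : u ∉ L)
    (hmax : ¬ CopyIn (pathGraph (L.length + 1)) G) (hL : 0 < L.length) :
    ¬ G.Adj u L[L.length - 1] := fun hadj => hmax <| by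
  have hne : L ≠ [] := List.ne_nil_of_length_pos hL
  have := copyIn_pathGraph_of_nodup_isChain (L := L ++ [u])
    ((List.perm_append_singleton u L).nodup_iff.mpr (List.nodup_cons.mpr ⟨hu, hnd⟩))
    (List.isChain_append.mpr ⟨hch, List.isChain_singleton u, fun a ha b hb => by
      simp_all [List.getLast?_eq_getLast_of_ne_nil hne, List.getLast_eq_getElem, G.adj_comm]⟩)
  rwa [List.length_append, List.length_singleton] at this

theorem not_adj_getElem_and_succ (hnd : L.Nodup) (hch : L.IsChain G.Adj) (hu : u ∉ L)
    (hmax : ¬ CopyIn (pathGraph (L.length + 1)) G) {i : ℕ} (hi : i + 1 < L.length) :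
    ¬ (G.Adj u L[i] ∧ G.Adj u L[i + 1]) := fun ⟨h₁, h₂⟩ => hmax <| by
  have := copyIn_pathGraph_of_nodup_isChain
    (List.nodup_middle.mpr (by rw [List.take_append_drop]; exact List.nodup_cons.mpr ⟨hu, hnd⟩))
    (hch.take_append_cons_drop hi h₁.symm h₂)
  have hlen : (L.take (i + 1) ++ u :: L.drop (i + 1)).length = L.length + 1 := by
    simp only [List.length_append, List.length_take, List.length_cons, List.length_drop]
    omega
  rwa [hlen] at this

theorem ncard_adj_mem_le (hnd : L.Nodup) (hch : L.IsChain G.Adj) (hu : u ∉ L)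
    (hmax : ¬ CopyIn (pathGraph (L.length + 1)) G) :
    {v | v ∈ L ∧ G.Adj u v}.ncard ≤ (L.length - 1) / 2 := by
  classical
  set S := {v | v ∈ L ∧ G.Adj u v}
  have hlt : ∀ v ∈ S, L.idxOf v < L.length := fun v hv => List.idxOf_lt_length_iff.mpr hv.1
  have hadj : ∀ v ∈ S, ∀ i (hi : i < L.length), L.idxOf v = i → G.Adj u L[i] := by
    rintro v hv _ hi rfl
    simpa [List.getElem_idxOf] using hv.2
  have hIco : L.idxOf '' S ⊆ Set.Ico 1 (L.length - 1) := by
    rintro _ ⟨v, hv, rfl⟩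
    have := hlt v hv
    constructor
    · by_contra! h0
      exact not_adj_getElem_zero hnd hch hu hmax (by omega) (hadj v hv 0 _ (by omega))
    · by_contra! hlast
      exact not_adj_getElem_last hnd hch hu hmax (by omega) (hadj v hv _ _ (by omega))
  have hgap : ∀ i ∈ L.idxOf '' S, i + 1 ∉ L.idxOf '' S := by
    rintro _ ⟨v, hv, rfl⟩ ⟨w, hw, hvw⟩
    have := hlt w hw
    simp only at hvw
    exact not_adj_getElem_and_succ hnd hch hu hmax (by omega)
      ⟨hadj v hv _ _ rfl, hadj w hw _ _ hvw⟩
  calc S.ncard = (L.idxOf '' S).ncard :=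
        (Set.InjOn.ncard_image fun v hv w _ h => (List.idxOf_inj hv.1).mp h).symm
    _ ≤ (L.length - 1) / 2 := Set.ncard_le_of_subset_Ico_of_add_one_notMem hIco hgap

end SimpleGraph

theorem lemma_no_ham_path_degree_bound_general {V : Type*} (G : SimpleGraph V)
    (k : ℕ) (hnoHam : ¬ CopyIn (pathGraph k) G)
    (x y : V) (P : G.Walk x y) (hP : P.IsPath) (hPlen : P.support.length = k - 1)
    (u : V) (hu : u ∉ P.support)
    (s : ℕ) (hsdef : {v : V | v ∈ P.support ∧ G.Adj u v}.ncard = s) :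
    s ≤ k / 2 - 1 := by
  have hk : P.support.length + 1 = k := by
    have := List.length_pos_iff.mpr P.support_ne_nil
    omega
  subst hsdef
  calc _ ≤ (P.support.length - 1) / 2 :=
        ncard_adj_mem_le hP.support_nodup P.isChain_adj_support hu (hk ▸ hnoHam)
    _ = k / 2 - 1 := by omega

theorem lemma_no_ham_path_degree_bound {V : Type*} [Fintype V] (G : SimpleGraph V)
    (k : ℕ) (hcard : Fintype.card V = k) (hconn : G.Connected)
    (hnoHam : ¬ CopyIn (pathGraph k) G)
    (x y : V) (P : G.Walk x y) (hP : P.IsPath) (hPlen : P.support.length = k - 1)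
    (u : V) (hu : u ∉ P.support)
    (s : ℕ) (hsdef : {v : V | v ∈ P.support ∧ G.Adj u v}.ncard = s) :
    s ≤ k / 2 - 1 :=
  lemma_no_ham_path_degree_bound_general G k hnoHam x y P hP hPlen u hu s hsdef
end
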